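/- arXiv:1206.2112 — 6 statements merged into one kernel-verified Lean document; each statement's English description precedes it below -/
import Mathlib

section
/- For complex ω with Im(ω) > 1 and complex η with Im(η) > 0, the two-dimensional Fourier transform ∫_{ℝ²} e^{iωx + iηy} · σ̄·√(T/y)·(e^x − K)⁺ · 1_{y>0} dx dy equals σ̄(1+i)·√(πT/(2η)) · K^{1+iω}/(iω − ω²). -/
/-!
The integrand factorizes as `σ̄ · (e^{iωx} (eˣ − K)⁺) · (e^{iηy} √(T/y))`, so the double integral
is a product of two one-dimensional integrals. In `x`, the payoff vanishes below `log K` and the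
integral is elementary: `K^{1+s} / (s (1+s))` with `s = iω`, which needs `Re s < -1`, i.e.
`Im ω > 1`. In `y`, the substitution `y = t²` turns it into the half-line Gaussian integral
`∫₀^∞ e^{iηt²} dt`, giving `√T (π / (-iη))^{1/2}`. Matching this with `(1+i) (πT/(2η))^{1/2}` is a
branch computation: both sides lie in the right half-plane and have the same square.
-/

open MeasureTheory Complex Set

lemma ofReal_sqrt_mul_cpow_inv_two {T : ℝ} (hT : 0 ≤ T) (z : ℂ) :
    (√T : ℂ) * z ^ (2⁻¹ : ℂ) = (T * z) ^ (2⁻¹ : ℂ) := by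
  rcases hT.eq_or_lt with rfl | hT
  · simp
  rcases eq_or_ne z 0 with rfl | hz
  · simp
  have hT' : (T : ℂ) ≠ 0 := ofReal_ne_zero.mpr hT.ne'
  rw [Real.sqrt_eq_rpow, ofReal_cpow hT.le, cpow_def_of_ne_zero hT', cpow_def_of_ne_zero hz,
    cpow_def_of_ne_zero (mul_ne_zero hT' hz), log_ofReal_mul hT hz, ← exp_add, ofReal_log hT.le]
  push_cast
  ring_nf

lemma cpow_inv_two_two_mul_I_mul {w : ℂ} (hw : w.im < 0) :
    (2 * I * w) ^ (2⁻¹ : ℂ) = (1 + I) * w ^ (2⁻¹ : ℂ) := by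
  set s := w ^ (2⁻¹ : ℂ)
  have hs : s ^ 2 = w := cpow_ofNat_inv_pow w 2
  -- `s` lies in the open fourth quadrant, so `(1 + I) * s` lies in the right half-plane
  have hre : 0 < ((1 + I) * s).re := by
    have hnorm : w.re < ‖w‖ := (le_abs_self _).trans_lt (abs_re_lt_norm.mpr hw.ne)
    have him : 0 < √((‖w‖ - w.re) / 2) := Real.sqrt_pos.mpr (by linarith)
    simp only [mul_re, add_re, one_re, I_re, add_im, one_im, I_im, zero_add, add_zero, one_mul,
      s, cpow_inv_two_re, cpow_inv_two_im_eq_neg_sqrt hw]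
    linarith [Real.sqrt_nonneg ((‖w‖ + w.re) / 2)]
  calc (2 * I * w) ^ (2⁻¹ : ℂ) = (((1 + I) * s) ^ 2) ^ (2⁻¹ : ℂ) := by
        rw [mul_pow, hs]
        congr 1
        linear_combination (-w) * I_sq
    _ = (1 + I) * s := sq_cpow_two_inv hre

lemma integral_Ioi_cexp_neg_mul_div_sqrt {b : ℂ} (hb : 0 < b.re) :
    ∫ y in Ioi (0 : ℝ), cexp (-b * y) / (√y : ℂ) = (Real.pi / b) ^ (2⁻¹ : ℂ) := by
  have hsub : ∀ x ∈ Ioi (0 : ℝ), ((2 : ℝ) * x ^ ((2 : ℝ) - 1)) •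
      (cexp (-b * ↑(x ^ (2 : ℝ))) / (√(x ^ (2 : ℝ)) : ℂ)) = 2 * cexp (-b * (x : ℂ) ^ 2) := by
    intro x (hx : 0 < x)
    have hx' : (x : ℂ) ≠ 0 := ofReal_ne_zero.mpr hx.ne'
    norm_num [Real.sqrt_sq hx.le]
    field_simp
  rw [← integral_comp_rpow_Ioi_of_pos two_pos, setIntegral_congr_fun measurableSet_Ioi hsub,
    integral_const_mul, integral_gaussian_complex_Ioi hb, one_div (2 : ℂ)]
  ring

lemma integral_cexp_mul_max_exp_sub {s : ℂ} (hs : s.re < -1) {K : ℝ} (hK : 0 < K) :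
    ∫ x : ℝ, cexp (s * x) * (max (Real.exp x - K) 0 : ℝ) = (K : ℂ) ^ (1 + s) / (s * (1 + s)) := by
  have hs_re : s.re < 0 := by linarith
  have hs1_re : (1 + s).re < 0 := by simp only [add_re, one_re]; linarith
  have hs0 : s ≠ 0 := by rintro rfl; simp at hs_re
  have hs1 : 1 + s ≠ 0 := by intro h; simp [h] at hs1_re
  have hK' : (K : ℂ) ≠ 0 := ofReal_ne_zero.mpr hK.ne'
  have hKpow : ∀ z : ℂ, cexp (z * Real.log K) = (K : ℂ) ^ z := fun z => by
    rw [cpow_def_of_ne_zero hK', ofReal_log hK.le, mul_comm]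
  have hvanish : ∀ x ∉ Ioi (Real.log K), cexp (s * x) * (max (Real.exp x - K) 0 : ℝ) = 0 := by
    intro x hx
    have : Real.exp x ≤ K := (Real.le_log_iff_exp_le hK).mp (not_lt.mp hx)
    simp [max_eq_right (sub_nonpos.mpr this)]
  have hsplit : ∀ x ∈ Ioi (Real.log K), cexp (s * x) * (max (Real.exp x - K) 0 : ℝ) =
      cexp ((1 + s) * x) - K * cexp (s * x) := by
    intro x hx
    have : K < Real.exp x := (Real.log_lt_iff_lt_exp hK).mp hx
    rw [max_eq_left (sub_nonneg.mpr this.le), add_mul, one_mul, exp_add]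
    push_cast
    ring
  rw [← setIntegral_eq_integral_of_forall_compl_eq_zero hvanish,
    setIntegral_congr_fun measurableSet_Ioi hsplit,
    integral_sub (integrableOn_exp_mul_complex_Ioi hs1_re _)
      ((integrableOn_exp_mul_complex_Ioi hs_re _).const_mul _),
    integral_const_mul, integral_exp_mul_complex_Ioi hs1_re, integral_exp_mul_complex_Ioi hs_re,
    hKpow, hKpow, cpow_add _ _ hK', cpow_one]
  field_simp
  ring

lemma integral_Ioi_cexp_I_mul_mul_sqrt_div {η : ℂ} (hη : 0 < η.im) {T : ℝ} (hT : 0 < T) :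
    ∫ y in Ioi (0 : ℝ), cexp (I * η * y) * (√(T / y) : ℂ) =
      (1 + I) * (Real.pi * T / (2 * η)) ^ (2⁻¹ : ℂ) := by
  have hb : 0 < (-(I * η)).re := by simpa using hη
  have hη0 : η ≠ 0 := by rintro rfl; simp at hη
  have hw : (Real.pi * T / (2 * η)).im < 0 := by
    have hw_eq : Real.pi * T / (2 * η) = ((Real.pi * T / 2 : ℝ) : ℂ) * η⁻¹ := by
      push_cast; ring
    rw [hw_eq, im_ofReal_mul, inv_im]
    exact mul_neg_of_pos_of_neg (by positivity)
      (div_neg_of_neg_of_pos (neg_neg_of_pos hη) (normSq_pos.mpr hη0))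
  calc _ = √T * ∫ y in Ioi (0 : ℝ), cexp (-(-(I * η)) * y) / (√y : ℂ) := by
          rw [← integral_const_mul]
          refine setIntegral_congr_fun measurableSet_Ioi fun y (hy : 0 < y) => ?_
          rw [Real.sqrt_div' T hy.le, neg_neg]
          push_cast
          ring
    _ = (T * (Real.pi / -(I * η))) ^ (2⁻¹ : ℂ) := by
          rw [integral_Ioi_cexp_neg_mul_div_sqrt hb, ofReal_sqrt_mul_cpow_inv_two hT.le]
    _ = (2 * I * (Real.pi * T / (2 * η))) ^ (2⁻¹ : ℂ) := by
          congr 1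
          field_simp
          linear_combination (-(T : ℂ)) * I_sq
    _ = _ := cpow_inv_two_two_mul_I_mul hw

theorem stmt0_general (σbar T K : ℝ) (hT : 0 < T) (hK : 0 < K)
    (ω η : ℂ) (hω : 1 < ω.im) (hη : 0 < η.im) :
    (∫ x : ℝ, ∫ y in Set.Ioi (0:ℝ),
        Complex.exp (I * ω * x + I * η * y) *
          ((σbar * Real.sqrt (T / y) * max (Real.exp x - K) 0 : ℝ) : ℂ)) =
      (σbar : ℂ) * (1 + I) * ((Real.pi : ℂ) * (T : ℂ) / (2 * η)) ^ ((1:ℂ)/2) *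
        (K : ℂ) ^ (1 + I * ω) / (I * ω - ω ^ 2) := by
  have hs : (I * ω).re < -1 := by rw [I_mul_re]; linarith
  have hfactor : ∀ x y : ℝ, cexp (I * ω * x + I * η * y) *
      ((σbar * √(T / y) * max (Real.exp x - K) 0 : ℝ) : ℂ) =
      (σbar * (cexp (I * ω * x) * (max (Real.exp x - K) 0 : ℝ))) *
        (cexp (I * η * y) * (√(T / y) : ℂ)) := by
    intro x y
    rw [exp_add]
    push_cast
    ring
  simp only [hfactor, integral_const_mul, integral_mul_const,
    integral_Ioi_cexp_I_mul_mul_sqrt_div hη hT, integral_cexp_mul_max_exp_sub hs hK, one_div]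
  have hden : I * ω * (1 + I * ω) = I * ω - ω ^ 2 := by
    linear_combination ω ^ 2 * I_sq
  rw [hden]
  ring

/-- Fourier transform of the target volatility option payoff
`F(x,y) = σ̄ √(T/y) (eˣ − K)⁺ 1_{y>0}`. -/
theorem stmt0 (σbar T K : ℝ) (hσ : 0 < σbar) (hT : 0 < T) (hK : 0 < K)
    (ω η : ℂ) (hω : 1 < ω.im) (hη : 0 < η.im) :
    (∫ x : ℝ, ∫ y in Set.Ioi (0:ℝ),
        Complex.exp (I * ω * x + I * η * y) *
          ((σbar * Real.sqrt (T / y) * max (Real.exp x - K) 0 : ℝ) : ℂ)) =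
      (σbar : ℂ) * (1 + I) * ((Real.pi : ℂ) * (T : ℂ) / (2 * η)) ^ ((1:ℂ)/2) *
        (K : ℂ) ^ (1 + I * ω) / (I * ω - ω ^ 2) :=
  stmt0_general σbar T K hT hK ω η hω hη
end

section
/- For complex ω with Im(ω) > 1 and complex η with Im(η) > 0, the two-dimensional Fourier transform ∫_{ℝ²} e^{iωx + iηy} · (e^x − K)⁺ · 1_{K₁ ≤ √(y/T) ≤ K₂} dx dy equals (e^{iηK₁²T} − e^{iηK₂²T}) · K^{1+iω} / ((ω + iω²)·η). -/
/-!
The integrand is a function of `x` times a function of `y`, so the double integral is the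
product of two one-dimensional transforms. The `y`-factor is the integral of `e^{iηy}` over
`[K₁²T, K₂²T]`. The payoff `(eˣ − K)⁺` vanishes for `x ≤ log K` and equals `eˣ − K` beyond,
so the `x`-factor splits into two exponential integrals over `(log K, ∞)`, both convergent
because `Im ω > 1`; `K^{1+iω}` appears as `e^{(1+iω) log K}`.
-/

open MeasureTheory Complex Set

lemma integral_indicator_Icc_cexp_mul {a b : ℝ} (hab : a ≤ b) {c : ℂ} (hc : c ≠ 0) :
    ∫ y : ℝ, (Icc a b).indicator (fun y : ℝ => cexp (c * y)) y =
      (cexp (c * b) - cexp (c * a)) / c := by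
  rw [integral_indicator measurableSet_Icc, integral_Icc_eq_integral_Ioc,
    ← intervalIntegral.integral_of_le hab, integral_exp_mul_complex hc]

lemma cexp_mul_call_payoff_eq_indicator {K : ℝ} (hK : 0 < K) (c : ℂ) :
    (fun x : ℝ => cexp (c * x) * ((max (Real.exp x - K) 0 : ℝ) : ℂ)) =
      (Ioi (Real.log K)).indicator fun x : ℝ => cexp ((1 + c) * x) - K * cexp (c * x) := by
  funext x
  by_cases hx : Real.log K < x
  · have hKx : K ≤ Real.exp x := (Real.log_lt_iff_lt_exp hK).mp hx |>.le
    rw [indicator_of_mem (mem_Ioi.mpr hx), max_eq_left (sub_nonneg.mpr hKx), add_mul, one_mul,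
      Complex.exp_add]
    push_cast
    ring
  · have hxK : Real.exp x ≤ K := (Real.le_log_iff_exp_le hK).mp (not_lt.mp hx)
    rw [indicator_of_notMem (by simpa using hx), max_eq_right (sub_nonpos.mpr hxK)]
    simp

lemma integral_cexp_mul_call_payoff {K : ℝ} (hK : 0 < K) {c : ℂ} (hc : c.re < -1) :
    ∫ x : ℝ, cexp (c * x) * ((max (Real.exp x - K) 0 : ℝ) : ℂ) =
      (K : ℂ) ^ (1 + c) / (c * (1 + c)) := by
  have hc₀ : c.re < 0 := by linarith
  have hc₁ : (1 + c).re < 0 := by simp only [add_re, one_re]; linarith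
  have hc₀' : c ≠ 0 := fun h => by simp [h] at hc₀
  have hc₁' : 1 + c ≠ 0 := fun h => by simp [h] at hc₁
  have hK' : (K : ℂ) ≠ 0 := ofReal_ne_zero.mpr hK.ne'
  have hlog : cexp (Real.log K) = K := by rw [← ofReal_exp, Real.exp_log hK]
  rw [cexp_mul_call_payoff_eq_indicator hK, integral_indicator measurableSet_Ioi,
    integral_sub (integrableOn_exp_mul_complex_Ioi hc₁ _)
      ((integrableOn_exp_mul_complex_Ioi hc₀ _).const_mul _),
    integral_const_mul, integral_exp_mul_complex_Ioi hc₁, integral_exp_mul_complex_Ioi hc₀,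
    cpow_def_of_ne_zero hK', ← ofReal_log hK.le, mul_comm _ (1 + c), add_mul, one_mul,
    Complex.exp_add, hlog]
  field_simp
  ring

/-- Fourier transform of the volatility capped call payoff
`F(x,y) = (eˣ − K)⁺ 1_{K₁²T ≤ y ≤ K₂²T}`. -/
theorem stmt2 (K K₁ K₂ T : ℝ) (hK : 0 < K) (hT : 0 < T) (h1 : 0 < K₁) (h12 : K₁ < K₂)
    (ω η : ℂ) (hω : 1 < ω.im) (hη : 0 < η.im) :
    (∫ x : ℝ, ∫ y : ℝ,
        Complex.exp (I * ω * x + I * η * y) *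
          ((max (Real.exp x - K) 0 : ℝ) : ℂ) *
          (if K₁ ^ 2 * T ≤ y ∧ y ≤ K₂ ^ 2 * T then (1:ℂ) else 0)) =
      (Complex.exp (I * η * ((K₁ ^ 2 * T : ℝ) : ℂ)) -
          Complex.exp (I * η * ((K₂ ^ 2 * T : ℝ) : ℂ))) *
        (K : ℂ) ^ (1 + I * ω) / ((ω + I * ω ^ 2) * η) := by
  have hab : K₁ ^ 2 * T ≤ K₂ ^ 2 * T := by gcongr
  have hIω : (I * ω).re < -1 := by simpa using hω
  have hIη : I * η ≠ 0 := mul_ne_zero I_ne_zero fun h => by simp [h] at hη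
  have hsep : ∀ x y : ℝ,
      cexp (I * ω * x + I * η * y) * ((max (Real.exp x - K) 0 : ℝ) : ℂ) *
          (if K₁ ^ 2 * T ≤ y ∧ y ≤ K₂ ^ 2 * T then (1:ℂ) else 0) =
        cexp (I * ω * x) * ((max (Real.exp x - K) 0 : ℝ) : ℂ) *
          (Icc (K₁ ^ 2 * T) (K₂ ^ 2 * T)).indicator (fun y : ℝ => cexp (I * η * y)) y := by
    intro x y
    simp only [indicator, mem_Icc, Complex.exp_add]
    split_ifs <;> ring
  simp_rw [hsep, integral_const_mul, integral_indicator_Icc_cexp_mul hab hIη, integral_mul_const,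
    integral_cexp_mul_call_payoff hK hIω]
  have hω₀ : ω ≠ 0 := fun h => by rw [h] at hω; norm_num at hω
  have hω₁ : 1 + I * ω ≠ 0 := fun h => by
    have := congrArg re h
    simp only [add_re, one_re, zero_re] at this
    linarith
  field_simp
  rw [I_sq]
  ring
end

section
/- For complex ω with 1 < Im(ω) < 3 and complex η with Im(η) > 0, the two-dimensional Fourier transform ∫_{ℝ} ∫_0^∞ e^{iωx + iηy} · (e^x − N√(y/T))⁺ dy dx equals (N/√T)^{1+iω} · Γ((3+iω)/2) · (−iη)^{−3/2 − iω/2} / (iω − ω²). -/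
/-!
With `a = iω`, `z = -iη` and `K = N/√T`, integrate first in `x`: for `A = K√y` the integral
`∫ e^{ax} (eˣ - A)⁺ dx` is elementary and equals `A^{1+a} / (a(1+a))`, since the integrand
vanishes for `x < log A`. What remains is the Gamma integral
`∫₀^∞ y^{s-1} e^{-zy} dy = Γ(s) z^{-s}` with `s = (3+a)/2`, which holds for complex `z` with
`Re z > 0` by analytic continuation from `z > 0`. Fubini is justified by the same
`x`-computation applied to the modulus of the integrand, which leaves
`∫₀^∞ y^{(1 + Re a)/2} e^{-(Re z) y} dy`, finite because `Re a > -3`.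
-/

open MeasureTheory Complex Real Set Filter Topology

lemma integrableOn_rpow_mul_exp_neg_mul {p b : ℝ} (hp : -1 < p) (hb : 0 < b) :
    IntegrableOn (fun t : ℝ => t ^ p * rexp (-(b * t))) (Ioi 0) := by
  simpa [Real.rpow_one] using integrableOn_rpow_mul_exp_neg_mul_rpow hp one_pos hb

lemma aestronglyMeasurable_cpow_mul_cexp_neg_mul (s z : ℂ) :
    AEStronglyMeasurable (fun t : ℝ => (t : ℂ) ^ s * cexp (-(z * t)))
      (volume.restrict (Ioi 0)) := by
  refine (ContinuousOn.mul ?_ (by fun_prop)).aestronglyMeasurable measurableSet_Ioi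
  exact fun t ht => (continuousAt_cpow_const (ofReal_mem_slitPlane.2 ht)).comp
    continuous_ofReal.continuousAt |>.continuousWithinAt

lemma norm_cpow_mul_cexp_neg_mul {t : ℝ} (ht : 0 < t) (s z : ℂ) :
    ‖(t : ℂ) ^ s * cexp (-(z * t))‖ = t ^ s.re * rexp (-(z.re * t)) := by
  simp [norm_cpow_eq_rpow_re_of_pos ht, Complex.norm_exp]

lemma integrableOn_cpow_mul_cexp_neg_mul {s z : ℂ} (hs : -1 < s.re) (hz : 0 < z.re) :
    IntegrableOn (fun t : ℝ => (t : ℂ) ^ s * cexp (-(z * t))) (Ioi 0) := by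
  refine (integrableOn_rpow_mul_exp_neg_mul hs hz).mono'
    (aestronglyMeasurable_cpow_mul_cexp_neg_mul s z) ?_
  filter_upwards [ae_restrict_mem measurableSet_Ioi] with t ht
  rw [norm_cpow_mul_cexp_neg_mul ht]

lemma differentiableOn_integral_cpow_mul_cexp_neg_mul {s : ℂ} (hs : -1 < s.re) :
    DifferentiableOn ℂ (fun z : ℂ => ∫ t in Ioi (0 : ℝ), (t : ℂ) ^ s * cexp (-(z * t)))
      {z | 0 < z.re} := by
  intro w hw
  refine DifferentiableAt.differentiableWithinAt ?_
  have hε : 0 < w.re / 2 := half_pos hw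
  refine (hasDerivAt_integral_of_dominated_loc_of_deriv_le
    (F' := fun z (t : ℝ) => -((t : ℂ) ^ (s + 1) * cexp (-(z * t))))
    (bound := fun t => t ^ (s.re + 1) * rexp (-(w.re / 2 * t)))
    (Metric.ball_mem_nhds w hε)
    (.of_forall fun z => aestronglyMeasurable_cpow_mul_cexp_neg_mul s z)
    (integrableOn_cpow_mul_cexp_neg_mul hs hw)
    (aestronglyMeasurable_cpow_mul_cexp_neg_mul _ _).neg ?_
    (integrableOn_rpow_mul_exp_neg_mul (by linarith) hε) ?_).2.differentiableAt
  · filter_upwards [ae_restrict_mem measurableSet_Ioi] with t (ht : 0 < t) z hz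
    have hre : w.re / 2 ≤ z.re := by
      have := (abs_le.1 ((abs_re_le_norm (z - w)).trans (mem_ball_iff_norm.1 hz).le)).1
      simp only [sub_re] at this
      linarith
    rw [norm_neg, norm_cpow_mul_cexp_neg_mul ht, add_re, one_re]
    gcongr
  · filter_upwards [ae_restrict_mem measurableSet_Ioi] with t (ht : 0 < t) z _
    have hexp := ((hasDerivAt_id z).mul_const (t : ℂ)).neg.cexp
    refine (hexp.const_mul ((t : ℂ) ^ s)).congr_deriv ?_
    rw [cpow_add _ _ (ofReal_ne_zero.2 ht.ne'), cpow_one]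
    simp only [id, Pi.neg_apply]
    ring

theorem integral_cpow_mul_cexp_neg_mul_Ioi {s z : ℂ} (hs : 0 < s.re) (hz : 0 < z.re) :
    ∫ t in Ioi (0 : ℝ), (t : ℂ) ^ (s - 1) * cexp (-(z * t)) = Gamma s * z ^ (-s) := by
  have hopen : IsOpen {z : ℂ | 0 < z.re} := isOpen_lt continuous_const continuous_re
  have hlhs := (differentiableOn_integral_cpow_mul_cexp_neg_mul
    (s := s - 1) (by simpa using hs)).analyticOnNhd hopen
  have hrhs : AnalyticOnNhd ℂ (fun z : ℂ => Gamma s * z ^ (-s)) {z | 0 < z.re} :=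
    DifferentiableOn.analyticOnNhd (fun z hz => ((differentiableAt_id.cpow_const
      (mem_slitPlane_iff.2 (Or.inl hz))).const_mul _).differentiableWithinAt) hopen
  -- identity theorem: both sides agree on the positive reals, which accumulate at `1`
  refine hlhs.eqOn_of_preconnected_of_frequently_eq hrhs
    (convex_halfSpace_re_gt 0).isPreconnected (by simp : (0 : ℝ) < (1 : ℂ).re) ?_ hz
  have hreal : ∀ r : ℝ, 0 < r → ∫ t in Ioi (0 : ℝ), (t : ℂ) ^ (s - 1) * cexp (-(r * t)) =
      Gamma s * (r : ℂ) ^ (-s) := by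
    intro r hr
    have harg : (r : ℂ).arg ≠ π := by simp [arg_ofReal_of_nonneg hr.le, Real.pi_ne_zero.symm]
    rw [integral_cpow_mul_exp_neg_mul_Ioi hs hr, one_div, inv_cpow _ _ harg, ← cpow_neg, mul_comm]
  have hmaps : Tendsto ((↑) : ℝ → ℂ) (𝓝[≠] 1) (𝓝[≠] 1) := by
    have := (continuous_ofReal.continuousWithinAt (s := {1}ᶜ) (x := 1)).tendsto_nhdsWithin
      (t := {1}ᶜ) (fun r hr => by simpa using hr)
    rwa [ofReal_one] at this
  refine hmaps.frequently (Eventually.frequently ?_)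
  filter_upwards [eventually_nhdsWithin_of_eventually_nhds (lt_mem_nhds one_pos)] with r hr
  exact hreal r hr

lemma cexp_mul_max_exp_sub_eq_indicator (c : ℂ) {A : ℝ} (hA : 0 < A) :
    (fun x : ℝ => cexp (c * x) * ((max (rexp x - A) 0 : ℝ) : ℂ)) =
      (Ioi (Real.log A)).indicator fun x => cexp ((1 + c) * x) - A * cexp (c * x) := by
  ext x
  by_cases hx : x ∈ Ioi (Real.log A)
  · have : A ≤ rexp x := (log_le_iff_le_exp hA).1 (le_of_lt hx)
    rw [indicator_of_mem hx, max_eq_left (by linarith), add_mul, one_mul, Complex.exp_add]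
    push_cast
    ring
  · have : rexp x ≤ A := (le_log_iff_exp_le hA).1 (not_lt.1 hx)
    rw [indicator_of_notMem hx, max_eq_right (by linarith)]
    simp

lemma integrable_cexp_mul_max_exp_sub {c : ℂ} (hc : c.re < -1) {A : ℝ} (hA : 0 < A) :
    Integrable fun x : ℝ => cexp (c * x) * ((max (rexp x - A) 0 : ℝ) : ℂ) := by
  rw [cexp_mul_max_exp_sub_eq_indicator c hA, integrable_indicator_iff measurableSet_Ioi]
  exact (integrableOn_exp_mul_complex_Ioi (by simp; linarith) _).sub
    ((integrableOn_exp_mul_complex_Ioi (by linarith) _).const_mul _)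

theorem integral_cexp_mul_max_exp_sub_s3 {c : ℂ} (hc : c.re < -1) {A : ℝ} (hA : 0 < A) :
    ∫ x : ℝ, cexp (c * x) * ((max (rexp x - A) 0 : ℝ) : ℂ) =
      (A : ℂ) ^ (1 + c) / (c * (1 + c)) := by
  have hc₁ : (1 + c).re < 0 := by simp; linarith
  have hc₀ : c.re < 0 := by linarith
  have hc₁' : 1 + c ≠ 0 := fun h => by simp [h] at hc₁
  have hc₀' : c ≠ 0 := fun h => by simp [h] at hc₀
  have hpow : ∀ w : ℂ, cexp (w * (Real.log A : ℝ)) = (A : ℂ) ^ w := fun w => by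
    rw [cpow_def_of_ne_zero (ofReal_ne_zero.2 hA.ne'), ofReal_log hA.le, mul_comm]
  rw [cexp_mul_max_exp_sub_eq_indicator c hA, integral_indicator measurableSet_Ioi,
    integral_sub (integrableOn_exp_mul_complex_Ioi hc₁ _)
      ((integrableOn_exp_mul_complex_Ioi hc₀ _).const_mul _),
    integral_const_mul, integral_exp_mul_complex_Ioi hc₁, integral_exp_mul_complex_Ioi hc₀,
    hpow, hpow, cpow_add _ _ (ofReal_ne_zero.2 hA.ne'), cpow_one]
  field_simp
  ring

theorem integral_exp_mul_max_exp_sub {c : ℝ} (hc : c < -1) {A : ℝ} (hA : 0 < A) :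
    ∫ x : ℝ, rexp (c * x) * max (rexp x - A) 0 = A ^ (1 + c) / (c * (1 + c)) := by
  apply ofReal_injective
  rw [← integral_complex_ofReal]
  push_cast
  rw [ofReal_cpow hA.le]
  push_cast
  exact integral_cexp_mul_max_exp_sub_s3 (by simpa using hc) hA

lemma mul_sqrt_rpow {K y : ℝ} (hK : 0 ≤ K) (hy : 0 ≤ y) (p : ℝ) :
    (K * √y) ^ p = K ^ p * y ^ (p / 2) := by
  rw [Real.mul_rpow hK (Real.sqrt_nonneg y), Real.rpow_div_two_eq_sqrt p hy]

lemma ofReal_mul_sqrt_cpow {K y : ℝ} (hK : 0 ≤ K) (hy : 0 ≤ y) (p : ℂ) :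
    ((K * √y : ℝ) : ℂ) ^ p = (K : ℂ) ^ p * (y : ℂ) ^ (p / 2) := by
  rw [ofReal_mul, mul_cpow_ofReal_nonneg hK (Real.sqrt_nonneg y), Real.sqrt_eq_rpow,
    ← cpow_mul_ofReal_nonneg hy]
  push_cast
  ring_nf

lemma cexp_mul_sub_mul (a z : ℂ) (x y : ℝ) :
    cexp (a * x - z * y) = cexp (-(z * y)) * cexp (a * x) := by
  rw [sub_eq_neg_add, Complex.exp_add]

lemma norm_cexp_mul_sub_mul_mul_max (a z : ℂ) (K x y : ℝ) :
    ‖cexp (a * x - z * y) * ((max (rexp x - K * √y) 0 : ℝ) : ℂ)‖ =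
      rexp (-(z.re * y)) * (rexp (a.re * x) * max (rexp x - K * √y) 0) := by
  rw [cexp_mul_sub_mul, norm_mul, norm_mul, Complex.norm_exp, Complex.norm_exp, norm_real,
    Real.norm_of_nonneg (le_max_right _ _)]
  simp [mul_assoc]

section

variable {a z : ℂ} {K : ℝ}

lemma integrable_cexp_mul_sub_mul_mul_max (ha₃ : -3 < a.re) (ha₁ : a.re < -1) (hz : 0 < z.re)
    (hK : 0 < K) :
    Integrable
      (fun p : ℝ × ℝ => cexp (a * p.1 - z * p.2) * ((max (rexp p.1 - K * √p.2) 0 : ℝ) : ℂ))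
      (volume.prod (volume.restrict (Ioi 0))) := by
  refine (integrable_prod_iff' (Continuous.aestronglyMeasurable (by fun_prop))).2 ⟨?_, ?_⟩
  · filter_upwards [ae_restrict_mem measurableSet_Ioi] with y (hy : 0 < y)
    simp_rw [cexp_mul_sub_mul, mul_assoc]
    exact (integrable_cexp_mul_max_exp_sub ha₁ (by positivity)).const_mul _
  · have hnorm : EqOn
        (fun y : ℝ => K ^ (1 + a.re) / (a.re * (1 + a.re)) *
          (y ^ ((1 + a.re) / 2) * rexp (-(z.re * y))))
        (fun y => ∫ x : ℝ, ‖cexp (a * x - z * y) * ((max (rexp x - K * √y) 0 : ℝ) : ℂ)‖)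
        (Ioi 0) := by
      intro y (hy : 0 < y)
      simp_rw [norm_cexp_mul_sub_mul_mul_max]
      rw [integral_const_mul, integral_exp_mul_max_exp_sub ha₁ (by positivity),
        mul_sqrt_rpow hK.le hy.le]
      ring
    exact IntegrableOn.congr_fun
      ((integrableOn_rpow_mul_exp_neg_mul (by linarith) hz).const_mul _) hnorm measurableSet_Ioi

theorem integral_integral_cexp_mul_sub_mul_mul_max (ha₃ : -3 < a.re) (ha₁ : a.re < -1)
    (hz : 0 < z.re) (hK : 0 < K) :
    ∫ x : ℝ, ∫ y in Ioi (0 : ℝ), cexp (a * x - z * y) * ((max (rexp x - K * √y) 0 : ℝ) : ℂ) =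
      (K : ℂ) ^ (1 + a) * Gamma ((3 + a) / 2) * z ^ (-((3 + a) / 2)) / (a * (1 + a)) := by
  rw [integral_integral_swap (integrable_cexp_mul_sub_mul_mul_max ha₃ ha₁ hz hK)]
  have hinner : EqOn
      (fun y : ℝ => ∫ x : ℝ, cexp (a * x - z * y) * ((max (rexp x - K * √y) 0 : ℝ) : ℂ))
      (fun y => (K : ℂ) ^ (1 + a) / (a * (1 + a)) *
        ((y : ℂ) ^ ((3 + a) / 2 - 1) * cexp (-(z * y))))
      (Ioi 0) := by
    intro y (hy : 0 < y)
    simp_rw [cexp_mul_sub_mul, mul_assoc]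
    rw [integral_const_mul, integral_cexp_mul_max_exp_sub_s3 ha₁ (by positivity),
      ofReal_mul_sqrt_cpow hK.le hy.le]
    ring_nf
  rw [setIntegral_congr_fun measurableSet_Ioi hinner, integral_const_mul,
    integral_cpow_mul_cexp_neg_mul_Ioi (by simp; linarith) hz]
  ring

end

/-- Fourier transform of the volatility struck call payoff
`F(x,y) = (eˣ − N√(y/T))⁺`. -/
theorem stmt3 (N T : ℝ) (hN : 0 < N) (hT : 0 < T) (ω η : ℂ)
    (h1 : 1 < ω.im) (h3 : ω.im < 3) (hη : 0 < η.im) :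
    (∫ x : ℝ, ∫ y in Set.Ioi (0:ℝ),
        Complex.exp (I * ω * x + I * η * y) *
          ((max (Real.exp x - N * Real.sqrt (y / T)) 0 : ℝ) : ℂ)) =
      ((N / Real.sqrt T : ℝ) : ℂ) ^ (1 + I * ω) * Complex.Gamma ((3 + I * ω) / 2) *
        (-I * η) ^ (-(3:ℂ)/2 - I * ω / 2) / (I * ω - ω ^ 2) := by
  have hK : ∀ y : ℝ, N * √(y / T) = N / √T * √y := fun y => by
    rw [Real.sqrt_div' y hT.le]; ring
  have hexp : ∀ x y : ℝ, I * ω * x + I * η * y = I * ω * x - -I * η * y := fun x y => by ring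
  simp_rw [hK, hexp]
  rw [integral_integral_cexp_mul_sub_mul_mul_max (by simpa using h3) (by simpa using h1)
    (by simpa using hη) (by positivity)]
  have hden : I * ω - ω ^ 2 = I * ω * (1 + I * ω) := by ring_nf; rw [I_sq]; ring
  rw [hden, show -(3 : ℂ) / 2 - I * ω / 2 = -((3 + I * ω) / 2) by ring]
end

section
/- For the Heston variance process with drift α(x) = κ(θ − x) and diffusion β(x) = ε√x (κ, θ, ε > 0), the scale-measure integral p(x) = (2/ε²)∫₁^x u^{−2κθ/ε²} e^{(2κ/ε²)(u−1)} (∫₁^u z^{2κθ/ε²−1} e^{−(2κ/ε²)(z−1)} dz) du satisfies: p(x) → +∞ as x → +∞; and lim_{x→0⁺} p(x) is finite if and only if 2κθ < ε². -/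
/-!
Write `a = 2κθ/ε²`, `b = 2κ/ε²`, `s(u) = u^(-a) e^(b(u-1))` for the scale density,
`m(z) = z^(a-1) e^(-b(z-1))` for the speed density and `F(u) = ∫₁ᵘ m`, so that
`p = (2/ε²) ∫₁ˣ s F`, with `s F = Heston.fellerIntegrand a b`. Since `m > 0`, `F` is
strictly increasing with `F(1) = 0`.

At `+∞`, `s(u) → ∞` and `F(u) ≥ F(2) > 0`, so the integrand is eventually bounded below
by a positive constant and `p(x)` grows at least linearly.

At `0⁺`, if `a < 1` then `m` is integrable at `0`, so `F` is continuous on `[0, 1]`,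
and `s F` is `u^(-a)` times a continuous function, hence integrable at `0`: `p` has a
finite limit. If `a ≥ 1` then `s(u) ≥ e^(-|b|) u⁻¹` and `F(u) ≤ F(1/2) < 0` on
`(0, 1/2]`, so the integrand is below `-c/u` there and `p(x) ≥ C - c log x → ∞`.
-/

open Filter Topology Set MeasureTheory intervalIntegral Real

section PrimitiveLimits

variable {g : ℝ → ℝ}

lemma tendsto_intervalIntegral_atTop_of_eventually_ge {a c : ℝ} (hc : 0 < c)
    (hint : ∀ x ≥ a, IntervalIntegrable g volume a x) (hge : ∀ᶠ u in atTop, c ≤ g u) :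
    Tendsto (fun x => ∫ u in a..x, g u) atTop atTop := by
  obtain ⟨M, hM⟩ := hge.exists_forall_of_atTop
  set N := max a M
  have hlin : Tendsto (fun x => (∫ u in a..N, g u) + c * (x - N)) atTop atTop :=
    tendsto_atTop_add_const_left _ _
      ((tendsto_atTop_add_const_right _ _ tendsto_id).const_mul_atTop hc)
  refine tendsto_atTop_mono' _ ?_ hlin
  filter_upwards [eventually_ge_atTop N] with x hx
  have hNx : IntervalIntegrable g volume N x :=
    (hint N (le_max_left _ _)).symm.trans (hint x ((le_max_left _ _).trans hx))
  calc (∫ u in a..N, g u) + c * (x - N) = (∫ u in a..N, g u) + ∫ _ in N..x, c := by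
        rw [intervalIntegral.integral_const, smul_eq_mul, mul_comm]
    _ ≤ (∫ u in a..N, g u) + ∫ u in N..x, g u := by
        gcongr
        exact integral_mono_on hx intervalIntegrable_const hNx
          fun u hu => hM u ((le_max_right _ _).trans hu.1)
    _ = ∫ u in a..x, g u := integral_add_adjacent_intervals (hint N (le_max_left _ _)) hNx

lemma tendsto_intervalIntegral_nhdsGT_zero_atTop_of_le_neg_inv {a δ c : ℝ} (hδ : 0 < δ)
    (hc : 0 < c) (hint : ∀ x, 0 < x → IntervalIntegrable g volume a x)
    (hle : ∀ u ∈ Ioc 0 δ, g u ≤ -(c * u⁻¹)) :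
    Tendsto (fun x => ∫ u in a..x, g u) (𝓝[>] 0) atTop := by
  have hlog : Tendsto (fun x => (∫ u in a..δ, g u) + c * (log δ - log x)) (𝓝[>] 0) atTop := by
    refine tendsto_atTop_add_const_left _ _ (Tendsto.const_mul_atTop hc ?_)
    exact tendsto_atTop_add_const_left _ _ (tendsto_neg_atBot_atTop.comp tendsto_log_nhdsGT_zero)
  refine tendsto_atTop_mono' _ ?_ hlog
  filter_upwards [Ioc_mem_nhdsGT hδ] with x hx
  have hxδ : IntervalIntegrable g volume x δ := (hint x hx.1).symm.trans (hint δ hδ)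
  have hinv : IntervalIntegrable (fun u => -(c * u⁻¹)) volume x δ :=
    ((intervalIntegrable_inv (fun u hu => ((ordConnected_Ioi.uIcc_subset hx.1 hδ) hu).ne')
      continuousOn_id).const_mul c).neg
  calc (∫ u in a..δ, g u) + c * (log δ - log x)
        = (∫ u in a..δ, g u) - ∫ u in x..δ, -(c * u⁻¹) := by
        rw [intervalIntegral.integral_neg, intervalIntegral.integral_const_mul,
          integral_inv_of_pos hx.1 hδ, log_div hδ.ne' hx.1.ne']
        ring
    _ ≤ (∫ u in a..δ, g u) - ∫ u in x..δ, g u := by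
        gcongr
        exact integral_mono_on hx.2 hxδ hinv fun u hu => hle u ⟨hx.1.trans_le hu.1, hu.2⟩
    _ = ∫ u in a..x, g u := by
        rw [← integral_add_adjacent_intervals (hint x hx.1) hxδ]
        ring

lemma tendsto_intervalIntegral_nhdsGT_zero {a : ℝ} (ha : 0 < a)
    (hg : IntervalIntegrable g volume 0 a) :
    Tendsto (fun x => ∫ u in a..x, g u) (𝓝[>] 0) (𝓝 (∫ u in a..0, g u)) := by
  have hcont := continuousOn_primitive_interval' hg right_mem_uIcc
  refine ((hcont 0 left_mem_uIcc).mono_of_mem_nhdsWithin ?_).tendsto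
  rw [uIcc_of_le ha.le]
  exact Icc_mem_nhdsGT ha

end PrimitiveLimits

namespace Heston

noncomputable def scaleDensity (a b u : ℝ) : ℝ := u ^ (-a) * exp (b * (u - 1))

noncomputable def speedDensity (a b z : ℝ) : ℝ := z ^ (a - 1) * exp (-b * (z - 1))

noncomputable def fellerIntegrand (a b u : ℝ) : ℝ :=
  scaleDensity a b u * ∫ z in (1 : ℝ)..u, speedDensity a b z

variable {a b : ℝ}

lemma continuousOn_scaleDensity : ContinuousOn (scaleDensity a b) (Ioi 0) :=
  (continuousOn_id.rpow_const fun _ hu => Or.inl (ne_of_gt hu)).mul (by fun_prop)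

lemma continuousOn_speedDensity : ContinuousOn (speedDensity a b) (Ioi 0) :=
  (continuousOn_id.rpow_const fun _ hz => Or.inl (ne_of_gt hz)).mul (by fun_prop)

lemma speedDensity_pos {z : ℝ} (hz : 0 < z) : 0 < speedDensity a b z :=
  mul_pos (rpow_pos_of_pos hz _) (exp_pos _)

lemma intervalIntegrable_speedDensity {x y : ℝ} (hx : 0 < x) (hy : 0 < y) :
    IntervalIntegrable (speedDensity a b) volume x y :=
  (continuousOn_speedDensity.mono (ordConnected_Ioi.uIcc_subset hx hy)).intervalIntegrable

lemma intervalIntegrable_speedDensity_zero_one (ha : 0 < a) :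
    IntervalIntegrable (speedDensity a b) volume 0 1 :=
  (intervalIntegrable_rpow' (by linarith)).mul_continuousOn (by fun_prop)

lemma strictMonoOn_integral_speedDensity :
    StrictMonoOn (fun u => ∫ z in (1 : ℝ)..u, speedDensity a b z) (Ioi 0) := by
  intro x hx y hy hxy
  rw [← sub_pos, integral_interval_sub_left (intervalIntegrable_speedDensity one_pos hy)
    (intervalIntegrable_speedDensity one_pos hx)]
  exact intervalIntegral_pos_of_pos_on (intervalIntegrable_speedDensity hx hy)
    (fun z hz => speedDensity_pos ((mem_Ioi.1 hx).trans hz.1)) hxy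

lemma tendsto_scaleDensity_atTop (hb : 0 < b) : Tendsto (scaleDensity a b) atTop atTop := by
  refine ((tendsto_exp_mul_div_rpow_atTop a b hb).const_mul_atTop (exp_pos (-b))).congr' ?_
  filter_upwards [eventually_ge_atTop 0] with u hu
  rw [scaleDensity, rpow_neg hu, mul_sub, mul_one, sub_eq_add_neg, exp_add]
  ring

lemma intervalIntegrable_fellerIntegrand {x : ℝ} (hx : 0 < x) :
    IntervalIntegrable (fellerIntegrand a b) volume 1 x :=
  ContinuousOn.intervalIntegrable <|
    (continuousOn_scaleDensity.mono (ordConnected_Ioi.uIcc_subset one_pos hx)).mul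
      (continuousOn_primitive_interval' (intervalIntegrable_speedDensity one_pos hx)
        left_mem_uIcc)

lemma intervalIntegrable_fellerIntegrand_zero_one (ha : 0 < a) (ha₁ : a < 1) :
    IntervalIntegrable (fellerIntegrand a b) volume 0 1 := by
  have hF : ContinuousOn (fun u => ∫ z in (1 : ℝ)..u, speedDensity a b z) (uIcc 0 1) :=
    continuousOn_primitive_interval' (intervalIntegrable_speedDensity_zero_one ha) right_mem_uIcc
  have h := (intervalIntegrable_rpow' (a := 0) (b := 1) (r := -a) (by linarith)).mul_continuousOn
    ((show Continuous fun u : ℝ => exp (b * (u - 1)) by fun_prop).continuousOn.mul hF)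
  convert h using 1
  ext u
  simp only [fellerIntegrand, scaleDensity, Pi.mul_apply, mul_assoc]

lemma inv_mul_le_scaleDensity (ha : 1 ≤ a) {u : ℝ} (hu : u ∈ Ioc 0 1) :
    exp (-|b|) * u⁻¹ ≤ scaleDensity a b u := by
  have hpow : u⁻¹ ≤ u ^ (-a) := by
    rw [← rpow_neg_one]
    exact rpow_le_rpow_of_exponent_ge hu.1 hu.2 (neg_le_neg ha)
  have hexp : exp (-|b|) ≤ exp (b * (u - 1)) := by
    have : |b * (u - 1)| ≤ |b| := by
      rw [abs_mul]
      exact mul_le_of_le_one_right (abs_nonneg _)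
        (abs_le.2 ⟨by linarith [hu.1], by linarith [hu.2]⟩)
    exact exp_le_exp.2 (abs_le.1 this).1
  rw [mul_comm, scaleDensity]
  exact mul_le_mul hpow hexp (exp_pos _).le (rpow_nonneg hu.1.le _)

lemma tendsto_integral_fellerIntegrand_atTop (hb : 0 < b) :
    Tendsto (fun x => ∫ u in (1 : ℝ)..x, fellerIntegrand a b u) atTop atTop := by
  set F := fun u => ∫ z in (1 : ℝ)..u, speedDensity a b z
  have hF2 : 0 < F 2 := by
    simpa [F] using strictMonoOn_integral_speedDensity (a := a) (b := b) (mem_Ioi.2 one_pos)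
      (mem_Ioi.2 two_pos) one_lt_two
  refine tendsto_intervalIntegral_atTop_of_eventually_ge hF2
    (fun x hx => intervalIntegrable_fellerIntegrand (one_pos.trans_le hx)) ?_
  filter_upwards [(tendsto_scaleDensity_atTop hb).eventually_ge_atTop 1, eventually_ge_atTop 2]
    with u hs hu
  have hFu : F 2 ≤ F u := strictMonoOn_integral_speedDensity.monotoneOn (mem_Ioi.2 two_pos)
    (mem_Ioi.2 (by linarith)) hu
  calc F 2 = 1 * F 2 := (one_mul _).symm
    _ ≤ scaleDensity a b u * F u := mul_le_mul hs hFu hF2.le (by linarith)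

lemma tendsto_integral_fellerIntegrand_nhdsGT_zero_atTop (ha : 1 ≤ a) :
    Tendsto (fun x => ∫ u in (1 : ℝ)..x, fellerIntegrand a b u) (𝓝[>] 0) atTop := by
  set F := fun u => ∫ z in (1 : ℝ)..u, speedDensity a b z
  have hF : F (1 / 2) < 0 := by
    simpa [F] using strictMonoOn_integral_speedDensity (a := a) (b := b)
      (mem_Ioi.2 one_half_pos) (mem_Ioi.2 one_pos) one_half_lt_one
  refine tendsto_intervalIntegral_nhdsGT_zero_atTop_of_le_neg_inv one_half_pos
    (mul_pos (exp_pos (-|b|)) (neg_pos.2 hF)) (fun x hx => intervalIntegrable_fellerIntegrand hx) ?_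
  intro u hu
  have hFu : F u ≤ F (1 / 2) := strictMonoOn_integral_speedDensity.monotoneOn hu.1
    (mem_Ioi.2 one_half_pos) hu.2
  have hs := inv_mul_le_scaleDensity (b := b) ha ⟨hu.1, hu.2.trans one_half_lt_one.le⟩
  calc fellerIntegrand a b u = scaleDensity a b u * F u := rfl
    _ ≤ scaleDensity a b u * F (1 / 2) :=
        mul_le_mul_of_nonneg_left hFu
          ((mul_nonneg (exp_pos _).le (inv_nonneg.2 hu.1.le)).trans hs)
    _ ≤ exp (-|b|) * u⁻¹ * F (1 / 2) := mul_le_mul_of_nonpos_right hs hF.le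
    _ = -(exp (-|b|) * -F (1 / 2) * u⁻¹) := by ring

end Heston

/-- Feller boundary classification for the Heston variance process via its
scale function: `+∞` is unattainable, and `0` is attainable iff `2κθ < ε²`. -/
theorem stmt7 (κ θ ε : ℝ) (hκ : 0 < κ) (hθ : 0 < θ) (hε : 0 < ε) :
    (Tendsto (fun x : ℝ => (2 / ε ^ 2) * ∫ u in (1:ℝ)..x,
        u ^ (-(2 * κ * θ / ε ^ 2)) * Real.exp ((2 * κ / ε ^ 2) * (u - 1)) *
          ∫ z in (1:ℝ)..u, z ^ (2 * κ * θ / ε ^ 2 - 1) *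
            Real.exp (-(2 * κ / ε ^ 2) * (z - 1))) atTop atTop) ∧
    ((∃ L : ℝ, Tendsto (fun x : ℝ => (2 / ε ^ 2) * ∫ u in (1:ℝ)..x,
        u ^ (-(2 * κ * θ / ε ^ 2)) * Real.exp ((2 * κ / ε ^ 2) * (u - 1)) *
          ∫ z in (1:ℝ)..u, z ^ (2 * κ * θ / ε ^ 2 - 1) *
            Real.exp (-(2 * κ / ε ^ 2) * (z - 1)))
        (nhdsWithin 0 (Set.Ioi 0)) (nhds L)) ↔ 2 * κ * θ < ε ^ 2) := by
  set a := 2 * κ * θ / ε ^ 2 with ha_def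
  set b := 2 * κ / ε ^ 2
  have ha : 0 < a := by positivity
  have hc : 0 < 2 / ε ^ 2 := by positivity
  change Tendsto (fun x => 2 / ε ^ 2 * ∫ u in (1 : ℝ)..x, Heston.fellerIntegrand a b u) _ _ ∧
    ((∃ L, Tendsto (fun x => 2 / ε ^ 2 * ∫ u in (1 : ℝ)..x, Heston.fellerIntegrand a b u) _ _) ↔ _)
  rw [← div_lt_one (by positivity), ← ha_def]
  refine ⟨(Heston.tendsto_integral_fellerIntegrand_atTop (by positivity)).const_mul_atTop hc,
    fun ⟨L, hL⟩ => ?_, fun ha₁ => ?_⟩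
  · by_contra! ha₁
    exact not_tendsto_nhds_of_tendsto_atTop
      ((Heston.tendsto_integral_fellerIntegrand_nhdsGT_zero_atTop ha₁).const_mul_atTop hc) L hL
  · exact ⟨_, (tendsto_intervalIntegral_nhdsGT_zero one_pos
      (Heston.intervalIntegrable_fellerIntegrand_zero_one ha ha₁)).const_mul _⟩
end

section
/- For the 3/2 variance model, the scale-measure integral p(x) = (2/ε²)∫₁^x u^{2κ/ε²} e^{(4κθ/ε²)(1/u − 1)} (∫₁^u z^{−2κ/ε² − 3} e^{−(4κθ/ε²)(1/z − 1)} dz) du satisfies: lim_{x→0⁺} p(x) = +∞ for all admissible parameters, and lim_{x→+∞} p(x) is finite if and only if 2κ < −ε². -/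
/-!
With `a = 2κ/ε²` and `b = 4κθ/ε²` one has `p x = (2/ε²) ∫₁ˣ s(u) ∫₁ᵘ m(z) dz du` with
`s = scaleDensity a b` and `m = speedDensity a b`, and `s(u) m(z) = u^a z^(-a-3) exp (b (1/u - 1/z))`.
Whenever `|1/u - 1/z| ≤ 1` the exponential lies in `[exp (-|b|), exp |b|]`, so the double
integrand is comparable to the pure power `u^a z^(-a-3)`.

Near `0`, keeping only `z ∈ [u, u + u²]` in `∫ᵤ¹ m` already gives `-s(u) ∫₁ᵘ m ≳ 1/u`, so `p`
diverges logarithmically. At infinity, `z ∈ [1, u]` always qualifies: for `a ≥ -1` the part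
`z ∈ [1, 2]` gives `s(u) ∫₁ᵘ m ≳ u^a ≥ 1/u`, and `p` diverges; for `a < -1` the integrand is
`≲ u^(-1-δ)` for some `δ > 0`, and `p` converges.
-/

open Filter MeasureTheory Set intervalIntegral Real Topology

section HalfLine

variable {f : ℝ → ℝ}

lemma ContinuousOn.intervalIntegrable_of_Ioi (hf : ContinuousOn f (Ioi 0)) {c d : ℝ}
    (hc : 0 < c) (hd : 0 < d) : IntervalIntegrable f volume c d :=
  (hf.mono fun _ hz => (lt_min hc hd).trans_le hz.1).intervalIntegrable

lemma ContinuousOn.continuousOn_primitive_of_Ioi (hf : ContinuousOn f (Ioi 0)) {a : ℝ}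
    (ha : 0 < a) :
    ContinuousOn (fun x => ∫ t in a..x, f t) (Ioi 0) := fun x hx =>
  (intervalIntegral.integral_hasDerivAt_right (hf.intervalIntegrable_of_Ioi ha hx)
    (hf.stronglyMeasurableAtFilter isOpen_Ioi x hx)
    (hf.continuousAt (Ioi_mem_nhds hx))).continuousAt.continuousWithinAt

lemma continuousOn_const_mul_inv_Ioi (c : ℝ) : ContinuousOn (fun u : ℝ => c * u⁻¹) (Ioi 0) :=
  continuousOn_const.mul (continuousOn_inv₀.mono fun _ hu => ne_of_gt hu)

lemma tendsto_integral_atTop_of_inv_le (hf : ContinuousOn f (Ioi 0)) {a x₀ c : ℝ}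
    (ha : 0 < a) (hx₀ : 0 < x₀) (hc : 0 < c) (hle : ∀ u ≥ x₀, c * u⁻¹ ≤ f u) :
    Tendsto (fun x => ∫ u in a..x, f u) atTop atTop := by
  have hlog : Tendsto (fun x => (∫ u in a..x₀, f u) + c * log (x / x₀)) atTop atTop :=
    tendsto_atTop_add_const_left _ _
      ((tendsto_log_atTop.comp (tendsto_id.atTop_div_const hx₀)).const_mul_atTop hc)
  refine tendsto_atTop_mono' _ ?_ hlog
  filter_upwards [eventually_ge_atTop x₀] with x hx
  have hx0 : 0 < x := hx₀.trans_le hx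
  rw [← integral_add_adjacent_intervals (hf.intervalIntegrable_of_Ioi ha hx₀)
    (hf.intervalIntegrable_of_Ioi hx₀ hx0)]
  gcongr
  calc c * log (x / x₀) = ∫ u in x₀..x, c * u⁻¹ := by
        rw [intervalIntegral.integral_const_mul, integral_inv_of_pos hx₀ hx0]
    _ ≤ ∫ u in x₀..x, f u :=
        integral_mono_on hx ((continuousOn_const_mul_inv_Ioi c).intervalIntegrable_of_Ioi hx₀ hx0)
          (hf.intervalIntegrable_of_Ioi hx₀ hx0) fun u hu => hle u hu.1

lemma tendsto_integral_nhdsGT_zero_of_inv_le_neg (hf : ContinuousOn f (Ioi 0)) {a x₀ c : ℝ}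
    (ha : 0 < a) (hx₀ : 0 < x₀) (hc : 0 < c) (hle : ∀ u ∈ Ioc 0 x₀, c * u⁻¹ ≤ -f u) :
    Tendsto (fun x => ∫ u in a..x, f u) (𝓝[>] 0) atTop := by
  have hlog :
      Tendsto (fun x => (∫ u in a..x₀, f u) + c * log (x₀ * x⁻¹)) (𝓝[>] 0) atTop :=
    tendsto_atTop_add_const_left _ _
      ((tendsto_log_atTop.comp (tendsto_inv_nhdsGT_zero.const_mul_atTop hx₀)).const_mul_atTop hc)
  refine tendsto_atTop_mono' _ ?_ hlog
  filter_upwards [Ioc_mem_nhdsGT hx₀] with x hx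
  rw [← integral_add_adjacent_intervals (hf.intervalIntegrable_of_Ioi ha hx₀)
    (hf.intervalIntegrable_of_Ioi hx₀ hx.1), intervalIntegral.integral_symm x x₀,
    ← intervalIntegral.integral_neg]
  gcongr
  calc c * log (x₀ * x⁻¹) = ∫ u in x..x₀, c * u⁻¹ := by
        rw [intervalIntegral.integral_const_mul, integral_inv_of_pos hx.1 hx₀, div_eq_mul_inv]
    _ ≤ ∫ u in x..x₀, -f u :=
        integral_mono_on hx.2
          ((continuousOn_const_mul_inv_Ioi c).intervalIntegrable_of_Ioi hx.1 hx₀)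
          (hf.intervalIntegrable_of_Ioi hx.1 hx₀).neg
          fun u hu => hle u ⟨hx.1.trans_le hu.1, hu.2⟩

lemma exists_tendsto_integral_of_abs_le_rpow (hf : ContinuousOn f (Ioi 0)) {a C r : ℝ}
    (ha : 0 < a) (hr : r < -1) (hle : ∀ u ≥ a, |f u| ≤ C * u ^ r) :
    ∃ L, Tendsto (fun x => ∫ u in a..x, f u) atTop (𝓝 L) := by
  refine ⟨_, intervalIntegral_tendsto_integral_Ioi a ?_ tendsto_id⟩
  refine ((integrableOn_Ioi_rpow_of_lt hr ha).const_mul C).mono'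
    ((hf.mono (Ioi_subset_Ioi ha.le)).aestronglyMeasurable measurableSet_Ioi) ?_
  filter_upwards [ae_restrict_mem measurableSet_Ioi] with u hu
  exact (norm_eq_abs _).trans_le (hle u (le_of_lt hu))

end HalfLine

lemma abs_mul_le_abs_of_abs_le_one (b : ℝ) {t : ℝ} (ht : |t| ≤ 1) : |b * t| ≤ |b| :=
  abs_mul b t ▸ mul_le_of_le_one_right (abs_nonneg b) ht

lemma abs_one_div_sub_one_div_le_one {u z : ℝ} (hu : 1 ≤ u) (hz : 1 ≤ z) :
    |1 / u - 1 / z| ≤ 1 := by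
  have hu' : 1 / u ≤ 1 := (div_le_one (by linarith)).2 hu
  have hz' : 1 / z ≤ 1 := (div_le_one (by linarith)).2 hz
  have : 0 < 1 / u := by positivity
  have : 0 < 1 / z := by positivity
  rw [abs_le]
  constructor <;> linarith

lemma min_one_two_rpow_mul_rpow_le (α : ℝ) {u z : ℝ} (hu : 0 < u) (huz : u ≤ z)
    (hz : z ≤ 2 * u) :
    min 1 (2 ^ α) * u ^ α ≤ z ^ α := by
  rcases le_or_gt 0 α with hα | hα
  · calc min 1 (2 ^ α) * u ^ α ≤ 1 * u ^ α := by gcongr; exact min_le_left _ _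
      _ ≤ z ^ α := by rw [one_mul]; exact rpow_le_rpow hu.le huz hα
  · calc min 1 (2 ^ α) * u ^ α ≤ 2 ^ α * u ^ α := by gcongr; exact min_le_right _ _
      _ = (2 * u) ^ α := (mul_rpow zero_le_two hu.le).symm
      _ ≤ z ^ α := rpow_le_rpow_of_nonpos (hu.trans_le huz) hz hα.le

noncomputable section

namespace ThreeHalvesModel

variable (a b : ℝ)

def scaleDensity (u : ℝ) : ℝ := u ^ a * exp (b * (1 / u - 1))

def speedDensity (z : ℝ) : ℝ := z ^ (-a - 3) * exp (-b * (1 / z - 1))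

def fellerIntegrand (u : ℝ) : ℝ := scaleDensity a b u * ∫ z in (1:ℝ)..u, speedDensity a b z

lemma continuousOn_scaleDensity : ContinuousOn (scaleDensity a b) (Ioi 0) := by
  unfold scaleDensity
  fun_prop (disch := intro x hx; simp_all [ne_of_gt])

lemma continuousOn_speedDensity : ContinuousOn (speedDensity a b) (Ioi 0) := by
  unfold speedDensity
  fun_prop (disch := intro x hx; simp_all [ne_of_gt])

lemma continuousOn_fellerIntegrand : ContinuousOn (fellerIntegrand a b) (Ioi 0) :=
  (continuousOn_scaleDensity a b).mul
    ((continuousOn_speedDensity a b).continuousOn_primitive_of_Ioi one_pos)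

variable {a b}

lemma scaleDensity_pos {u : ℝ} (hu : 0 < u) : 0 < scaleDensity a b u := by
  unfold scaleDensity; positivity

lemma speedDensity_pos {z : ℝ} (hz : 0 < z) : 0 < speedDensity a b z := by
  unfold speedDensity; positivity

lemma fellerIntegrand_nonneg {u : ℝ} (hu : 1 ≤ u) : 0 ≤ fellerIntegrand a b u :=
  mul_nonneg (scaleDensity_pos (by linarith)).le
    (integral_nonneg hu fun z hz => (speedDensity_pos (by linarith [hz.1])).le)

variable (a b)

lemma fellerIntegrand_eq_integral (u : ℝ) :
    fellerIntegrand a b u = ∫ z in (1:ℝ)..u, scaleDensity a b u * speedDensity a b z :=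
  (intervalIntegral.integral_const_mul _ _).symm

lemma scaleDensity_mul_speedDensity (u z : ℝ) :
    scaleDensity a b u * speedDensity a b z =
      exp (b * (1 / u - 1 / z)) * (u ^ a * z ^ (-a - 3)) := by
  unfold scaleDensity speedDensity
  rw [mul_mul_mul_comm, ← exp_add]
  ring_nf

variable {a b}

lemma le_scaleDensity_mul_speedDensity {u z : ℝ} (hu : 0 ≤ u) (hz : 0 ≤ z)
    (h : |1 / u - 1 / z| ≤ 1) :
    exp (-|b|) * (u ^ a * z ^ (-a - 3)) ≤ scaleDensity a b u * speedDensity a b z := by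
  rw [scaleDensity_mul_speedDensity]
  gcongr
  exact neg_le_of_abs_le (abs_mul_le_abs_of_abs_le_one b h)

lemma scaleDensity_mul_speedDensity_le {u z : ℝ} (hu : 0 ≤ u) (hz : 0 ≤ z)
    (h : |1 / u - 1 / z| ≤ 1) :
    scaleDensity a b u * speedDensity a b z ≤ exp |b| * (u ^ a * z ^ (-a - 3)) := by
  rw [scaleDensity_mul_speedDensity]
  gcongr
  exact le_of_abs_le (abs_mul_le_abs_of_abs_le_one b h)

lemma inv_le_neg_fellerIntegrand {u : ℝ} (hu : 0 < u) (hu' : u ≤ 1 / 2) :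
    min 1 (2 ^ (-a - 3)) * exp (-|b|) * u⁻¹ ≤ -fellerIntegrand a b u := by
  set K := exp (-|b|) * (u ^ a * (min 1 (2 ^ (-a - 3)) * u ^ (-a - 3))) with hK
  have hsq : u ^ 2 ≤ u := by nlinarith
  have hkernel : ∀ z ∈ Icc u (u + u ^ 2), K ≤ scaleDensity a b u * speedDensity a b z := by
    intro z hz
    have hz0 : 0 < z := hu.trans_le hz.1
    have hclose : |1 / u - 1 / z| ≤ 1 := by
      rw [div_sub_div _ _ hu.ne' hz0.ne', abs_div, abs_of_nonneg (by nlinarith [hz.1]),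
        abs_of_pos (by positivity), div_le_one (by positivity)]
      nlinarith [hz.2]
    refine le_trans ?_ (le_scaleDensity_mul_speedDensity hu.le hz0.le hclose)
    rw [hK]
    gcongr
    exact min_one_two_rpow_mul_rpow_le _ hu hz.1 (by linarith [hz.2])
  have hpow : u ^ a * u ^ (-a - 3) = (u ^ 3)⁻¹ := by
    rw [← rpow_add hu, show a + (-a - 3) = -((3 : ℕ) : ℝ) by push_cast; ring, rpow_neg hu.le,
      rpow_natCast]
  have hKu : u ^ 2 * K = min 1 (2 ^ (-a - 3)) * exp (-|b|) * u⁻¹ := by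
    rw [show K = min 1 (2 ^ (-a - 3)) * exp (-|b|) * (u ^ a * u ^ (-a - 3)) by ring, hpow]
    field_simp
  have hint : IntervalIntegrable (fun z => scaleDensity a b u * speedDensity a b z) volume u 1 :=
    ((continuousOn_speedDensity a b).intervalIntegrable_of_Ioi hu one_pos).const_mul _
  calc min 1 (2 ^ (-a - 3)) * exp (-|b|) * u⁻¹ = ∫ _ in u..u + u ^ 2, K := by
        rw [intervalIntegral.integral_const, smul_eq_mul, add_sub_cancel_left, hKu]
    _ ≤ ∫ z in u..u + u ^ 2, scaleDensity a b u * speedDensity a b z :=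
        integral_mono_on (by nlinarith) intervalIntegrable_const
          (((continuousOn_speedDensity a b).intervalIntegrable_of_Ioi hu
            (by positivity)).const_mul _) hkernel
    _ ≤ ∫ z in u..1, scaleDensity a b u * speedDensity a b z :=
        integral_mono_interval le_rfl (by nlinarith) (by nlinarith)
          ((ae_restrict_mem measurableSet_Ioc).mono fun z hz =>
            (mul_pos (scaleDensity_pos hu) (speedDensity_pos (hu.trans hz.1))).le) hint
    _ = -fellerIntegrand a b u := by
        rw [fellerIntegrand_eq_integral, intervalIntegral.integral_symm]

lemma inv_le_fellerIntegrand (ha : -1 ≤ a) {u : ℝ} (hu : 2 ≤ u) :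
    exp (-|b|) * (∫ z in (1:ℝ)..2, z ^ (-a - 3)) * u⁻¹ ≤ fellerIntegrand a b u := by
  have hu0 : 0 < u := by linarith
  have hrpow : IntervalIntegrable (fun z : ℝ => z ^ (-a - 3)) volume 1 2 :=
    intervalIntegrable_rpow (Or.inr (by simp))
  have hI : 0 ≤ ∫ z in (1:ℝ)..2, z ^ (-a - 3) :=
    integral_nonneg one_le_two fun z hz => rpow_nonneg (by linarith [hz.1]) _
  have hinv : u⁻¹ ≤ u ^ a := by
    rw [← rpow_neg_one]; exact rpow_le_rpow_of_exponent_le (by linarith) ha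
  have hint : IntervalIntegrable (fun z => scaleDensity a b u * speedDensity a b z) volume 1 u :=
    ((continuousOn_speedDensity a b).intervalIntegrable_of_Ioi one_pos hu0).const_mul _
  calc exp (-|b|) * (∫ z in (1:ℝ)..2, z ^ (-a - 3)) * u⁻¹
      ≤ exp (-|b|) * (u ^ a * ∫ z in (1:ℝ)..2, z ^ (-a - 3)) := by
        rw [mul_assoc, mul_comm _ u⁻¹]; gcongr
    _ = ∫ z in (1:ℝ)..2, exp (-|b|) * (u ^ a * z ^ (-a - 3)) := by
        rw [intervalIntegral.integral_const_mul, intervalIntegral.integral_const_mul]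
    _ ≤ ∫ z in (1:ℝ)..2, scaleDensity a b u * speedDensity a b z :=
        integral_mono_on one_le_two ((hrpow.const_mul _).const_mul _)
          (((continuousOn_speedDensity a b).intervalIntegrable_of_Ioi one_pos two_pos).const_mul _)
          fun z hz => le_scaleDensity_mul_speedDensity hu0.le (by linarith [hz.1])
            (abs_one_div_sub_one_div_le_one (by linarith) hz.1)
    _ ≤ ∫ z in (1:ℝ)..u, scaleDensity a b u * speedDensity a b z :=
        integral_mono_interval le_rfl one_le_two hu
          ((ae_restrict_mem measurableSet_Ioc).mono fun z hz =>
            (mul_pos (scaleDensity_pos hu0) (speedDensity_pos (zero_lt_one.trans hz.1))).le) hint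
    _ = fellerIntegrand a b u := (fellerIntegrand_eq_integral a b u).symm

/-- On `1 ≤ z ≤ u` the factor `z ^ (-a - 1 - δ)` is at most `u ^ (-a - 1 - δ)`, leaving the
integrable `z ^ (δ - 2)`. -/
lemma fellerIntegrand_le_rpow {δ : ℝ} (hδ : δ < 1) (hδa : δ ≤ -a - 1) {u : ℝ}
    (hu : 1 ≤ u) : fellerIntegrand a b u ≤ exp |b| / (1 - δ) * u ^ (-1 - δ) := by
  have hu0 : 0 < u := by linarith
  have hpow : ∀ z ∈ Icc 1 u, u ^ a * z ^ (-a - 3) ≤ u ^ (-1 - δ) * z ^ (δ - 2) := by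
    intro z hz
    have hz0 : 0 < z := by linarith [hz.1]
    calc u ^ a * z ^ (-a - 3) = u ^ a * z ^ (-a - 1 - δ) * z ^ (δ - 2) := by
          rw [mul_assoc, ← rpow_add hz0]; ring_nf
      _ ≤ u ^ a * u ^ (-a - 1 - δ) * z ^ (δ - 2) := by
          gcongr
          exact hz.2
      _ = u ^ (-1 - δ) * z ^ (δ - 2) := by rw [← rpow_add hu0]; ring_nf
  have hnot0 : (0:ℝ) ∉ uIcc 1 u := by simp [uIcc_of_le hu]
  have hprim : ∫ z in (1:ℝ)..u, z ^ (δ - 2) ≤ 1 / (1 - δ) := by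
    rw [integral_rpow (Or.inr ⟨by linarith, hnot0⟩), one_rpow,
      show δ - 2 + 1 = -(1 - δ) by ring, div_neg, ← neg_div, neg_sub]
    gcongr
    linarith [rpow_pos_of_pos hu0 (-(1 - δ))]
  calc fellerIntegrand a b u = ∫ z in (1:ℝ)..u, scaleDensity a b u * speedDensity a b z :=
        fellerIntegrand_eq_integral a b u
    _ ≤ ∫ z in (1:ℝ)..u, exp |b| * (u ^ (-1 - δ) * z ^ (δ - 2)) := by
        refine integral_mono_on hu
          (((continuousOn_speedDensity a b).intervalIntegrable_of_Ioi one_pos hu0).const_mul _)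
          (((intervalIntegrable_rpow (Or.inr hnot0)).const_mul _).const_mul _) fun z hz => ?_
        have hz0 : 0 ≤ z := by linarith [hz.1]
        calc scaleDensity a b u * speedDensity a b z ≤ exp |b| * (u ^ a * z ^ (-a - 3)) :=
              scaleDensity_mul_speedDensity_le hu0.le hz0
                (abs_one_div_sub_one_div_le_one hu hz.1)
          _ ≤ exp |b| * (u ^ (-1 - δ) * z ^ (δ - 2)) :=
              mul_le_mul_of_nonneg_left (hpow z hz) (exp_pos _).le
    _ = exp |b| * u ^ (-1 - δ) * ∫ z in (1:ℝ)..u, z ^ (δ - 2) := by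
        rw [intervalIntegral.integral_const_mul, intervalIntegral.integral_const_mul, mul_assoc]
    _ ≤ exp |b| * u ^ (-1 - δ) * (1 / (1 - δ)) := by gcongr
    _ = exp |b| / (1 - δ) * u ^ (-1 - δ) := by ring

variable (a b)

lemma tendsto_integral_fellerIntegrand_nhdsGT_zero :
    Tendsto (fun x => ∫ u in (1:ℝ)..x, fellerIntegrand a b u) (𝓝[>] 0) atTop :=
  tendsto_integral_nhdsGT_zero_of_inv_le_neg (continuousOn_fellerIntegrand a b) one_pos
    (by norm_num : (0:ℝ) < 1 / 2) (by positivity)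
    fun _ hu => inv_le_neg_fellerIntegrand hu.1 hu.2

lemma tendsto_integral_fellerIntegrand_atTop (ha : -1 ≤ a) :
    Tendsto (fun x => ∫ u in (1:ℝ)..x, fellerIntegrand a b u) atTop atTop := by
  have hI : 0 < ∫ z in (1:ℝ)..2, z ^ (-a - 3) :=
    intervalIntegral_pos_of_pos_on (intervalIntegrable_rpow (Or.inr (by simp)))
      (fun z hz => rpow_pos_of_pos (by linarith [hz.1]) _) one_lt_two
  exact tendsto_integral_atTop_of_inv_le (continuousOn_fellerIntegrand a b) one_pos two_pos
    (by positivity) fun _ hu => inv_le_fellerIntegrand ha hu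

lemma exists_tendsto_integral_fellerIntegrand (ha : a < -1) :
    ∃ L, Tendsto (fun x => ∫ u in (1:ℝ)..x, fellerIntegrand a b u) atTop (𝓝 L) := by
  set δ := min 1 (-a - 1) / 2 with hδdef
  have hδ : 0 < δ := half_pos (lt_min one_pos (by linarith))
  refine exists_tendsto_integral_of_abs_le_rpow (continuousOn_fellerIntegrand a b) one_pos
    (C := exp |b| / (1 - δ)) (r := -1 - δ) (by linarith) fun u hu => ?_
  rw [abs_of_nonneg (fellerIntegrand_nonneg hu)]
  exact fellerIntegrand_le_rpow (by rw [hδdef]; linarith [min_le_left 1 (-a - 1)])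
    (by rw [hδdef]; linarith [min_le_right 1 (-a - 1), min_le_left 1 (-a - 1)]) hu

end ThreeHalvesModel

end

open ThreeHalvesModel

theorem stmt8_general (κ θ ε : ℝ) (hε : 0 < ε) :
    (Tendsto (fun x : ℝ => (2 / ε ^ 2) * ∫ u in (1:ℝ)..x,
        u ^ (2 * κ / ε ^ 2) * Real.exp ((4 * κ * θ / ε ^ 2) * (1 / u - 1)) *
          ∫ z in (1:ℝ)..u, z ^ (-(2 * κ / ε ^ 2) - 3) *
            Real.exp (-(4 * κ * θ / ε ^ 2) * (1 / z - 1)))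
        (nhdsWithin 0 (Set.Ioi 0)) atTop) ∧
    ((∃ L : ℝ, Tendsto (fun x : ℝ => (2 / ε ^ 2) * ∫ u in (1:ℝ)..x,
        u ^ (2 * κ / ε ^ 2) * Real.exp ((4 * κ * θ / ε ^ 2) * (1 / u - 1)) *
          ∫ z in (1:ℝ)..u, z ^ (-(2 * κ / ε ^ 2) - 3) *
            Real.exp (-(4 * κ * θ / ε ^ 2) * (1 / z - 1))) atTop (nhds L))
      ↔ 2 * κ < -ε ^ 2) := by
  have hε2 : 0 < ε ^ 2 := by positivity
  have hc : 0 < 2 / ε ^ 2 := by positivity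
  set a := 2 * κ / ε ^ 2
  set b := 4 * κ * θ / ε ^ 2
  have ha : a < -1 ↔ 2 * κ < -ε ^ 2 := by rw [div_lt_iff₀ hε2, neg_one_mul]
  change Tendsto (fun x => 2 / ε ^ 2 * ∫ u in (1:ℝ)..x, fellerIntegrand a b u) _ _ ∧
    ((∃ L, Tendsto (fun x => 2 / ε ^ 2 * ∫ u in (1:ℝ)..x, fellerIntegrand a b u) atTop (𝓝 L))
      ↔ _)
  refine ⟨(tendsto_integral_fellerIntegrand_nhdsGT_zero a b).const_mul_atTop hc, ?_, fun h => ?_⟩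
  · rintro ⟨L, hL⟩
    by_contra h
    exact not_tendsto_nhds_of_tendsto_atTop
      ((tendsto_integral_fellerIntegrand_atTop a b (not_lt.1 (mt ha.1 h))).const_mul_atTop hc) L hL
  · obtain ⟨L, hL⟩ := exists_tendsto_integral_fellerIntegrand a b (ha.2 h)
    exact ⟨_, hL.const_mul _⟩

/-- Feller boundary classification for the 3/2 variance model via its scale
function: `0` is unattainable for all parameters, and `+∞` is attainable iff
`2κ < −ε²`. -/
theorem stmt8 (κ θ ε : ℝ) (hθ : 0 < θ) (hε : 0 < ε) :
    (Tendsto (fun x : ℝ => (2 / ε ^ 2) * ∫ u in (1:ℝ)..x,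
        u ^ (2 * κ / ε ^ 2) * Real.exp ((4 * κ * θ / ε ^ 2) * (1 / u - 1)) *
          ∫ z in (1:ℝ)..u, z ^ (-(2 * κ / ε ^ 2) - 3) *
            Real.exp (-(4 * κ * θ / ε ^ 2) * (1 / z - 1)))
        (nhdsWithin 0 (Set.Ioi 0)) atTop) ∧
    ((∃ L : ℝ, Tendsto (fun x : ℝ => (2 / ε ^ 2) * ∫ u in (1:ℝ)..x,
        u ^ (2 * κ / ε ^ 2) * Real.exp ((4 * κ * θ / ε ^ 2) * (1 / u - 1)) *
          ∫ z in (1:ℝ)..u, z ^ (-(2 * κ / ε ^ 2) - 3) *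
            Real.exp (-(4 * κ * θ / ε ^ 2) * (1 / z - 1))) atTop (nhds L))
      ↔ 2 * κ < -ε ^ 2) :=
  stmt8_general κ θ ε hε
end

section
/- For complex ω with Im(ω) < 0 and K > 0, ∫_ℝ e^{iωx}(K − e^x)⁺ dx = K^{1+iω}/(iω − ω²). -/
open MeasureTheory Complex

/-!
The payoff `(K - eˣ)⁺` vanishes for `x ≥ log K` and equals `K - eˣ` below it, so the transform is
`∫_{-∞}^{log K} (K e^{cx} - e^{(1+c)x}) dx`, a difference of two elementary exponential integrals
that converge at `-∞` because `Re c > 0`; with `c = iω` this is the case `Im ω < 0`.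
-/

lemma max_sub_exp_zero_eq_zero_of_log_le {K x : ℝ} (hK : 0 < K) (hx : Real.log K ≤ x) :
    max (K - Real.exp x) 0 = 0 :=
  max_eq_right (sub_nonpos.mpr ((Real.log_le_iff_le_exp hK).mp hx))

lemma max_sub_exp_zero_eq_sub_of_le_log {K x : ℝ} (hK : 0 < K) (hx : x ≤ Real.log K) :
    max (K - Real.exp x) 0 = K - Real.exp x :=
  max_eq_left (sub_nonneg.mpr ((Real.le_log_iff_exp_le hK).mp hx))

lemma ofReal_cpow_eq_cexp_mul_log {K : ℝ} (hK : 0 < K) (z : ℂ) :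
    (K : ℂ) ^ z = cexp (z * Real.log K) := by
  rw [cpow_def_of_ne_zero (ofReal_ne_zero.mpr hK.ne'), ← ofReal_log hK.le, mul_comm]

theorem integral_cexp_mul_max_sub_exp_zero {K : ℝ} (hK : 0 < K) {c : ℂ} (hc : 0 < c.re) :
    ∫ x : ℝ, cexp (c * x) * ((max (K - Real.exp x) 0 : ℝ) : ℂ) =
      (K : ℂ) ^ (1 + c) / (c * (1 + c)) := by
  set L := Real.log K
  have hc' : 0 < (1 + c).re := by simp only [add_re, one_re]; linarith
  have hc0 : c ≠ 0 := fun h => by simp [h] at hc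
  have hc1 : 1 + c ≠ 0 := fun h => by simp [h] at hc'
  have hvanish : ∀ x ∉ Set.Iic L, cexp (c * x) * ((max (K - Real.exp x) 0 : ℝ) : ℂ) = 0 :=
    fun x hx => by
      rw [max_sub_exp_zero_eq_zero_of_log_le hK (not_le.mp hx).le, ofReal_zero, mul_zero]
  have hsplit : Set.EqOn (fun x : ℝ => cexp (c * x) * ((max (K - Real.exp x) 0 : ℝ) : ℂ))
      (fun x : ℝ => K * cexp (c * x) - cexp ((1 + c) * x)) (Set.Iic L) := fun x hx => by
    dsimp only
    rw [max_sub_exp_zero_eq_sub_of_le_log hK hx, add_mul, one_mul, exp_add, ← ofReal_exp]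
    push_cast
    ring
  rw [← setIntegral_eq_integral_of_forall_compl_eq_zero hvanish,
    setIntegral_congr_fun measurableSet_Iic hsplit,
    integral_sub ((integrableOn_exp_mul_complex_Iic hc L).const_mul _)
      (integrableOn_exp_mul_complex_Iic hc' L),
    integral_const_mul, integral_exp_mul_complex_Iic hc, integral_exp_mul_complex_Iic hc',
    ofReal_cpow_eq_cexp_mul_log hK]
  have hK_eq : (K : ℂ) = cexp L := by rw [← ofReal_exp, Real.exp_log hK]
  rw [hK_eq, add_mul, one_mul, exp_add]
  field_simp
  ring

/-- Fourier transform in log-price of the put payoff. -/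
theorem stmt14 (K : ℝ) (hK : 0 < K) (ω : ℂ) (hω : ω.im < 0) :
    (∫ x : ℝ, Complex.exp (I * ω * x) * ((max (K - Real.exp x) 0 : ℝ) : ℂ)) =
      (K : ℂ) ^ (1 + I * ω) / (I * ω - ω ^ 2) := by
  have hre : 0 < (I * ω).re := by simpa using hω
  rw [integral_cexp_mul_max_sub_exp_zero hK hre]
  congr 1
  linear_combination ω ^ 2 * I_sq
end
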